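/- Let P_D(·|p⊕x) denote the posterior predictive of a finite mixture Σ_φ P(φ)·P_φ. Under approximate-independence with constant c1 (c1 ≤ P_φ(p)P_φ(s)/P_φ(p⊕s) ≤ 1/c1 for all strings s and each component φ), for labels y, ỹ: P_D(y|p⊕x) - P_D(ỹ|p⊕x) ≥ [Σ_φ P(φ)·P_φ(p)·(c1²·P_φ(x⊕y) - c1^{-2}·P_φ(x⊕ỹ))] / [Σ_φ P(φ)·P_φ(p)·P_φ(x)]. -/

import Mathlib

open Finset

/-! Approximate independence sandwiches each component's `P_φ(p ⊕ s)` between `c₁` and `c₁⁻¹`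
times `P_φ(p) P_φ(s)`; with nonnegative weights the same sandwich holds for the mixture sums.
Bounding the numerator of `P_D(y | p ⊕ x)` from below and the common denominator `P_D(p ⊕ x)`
from above costs a factor `c₁²`, and the reverse bounds for `ỹ` cost `c₁⁻²`. -/

def ApproxIndep {α : Type*} (P : List α → ℝ) (p : List α) (c : ℝ) : Prop :=
  ∀ s, c ≤ P p * P s / P (p ++ s) ∧ P p * P s / P (p ++ s) ≤ 1 / c

namespace ApproxIndep

variable {α : Type*} {P : List α → ℝ} {p : List α} {c : ℝ}

theorem mul_le_apply_append (h : ApproxIndep P p c) (hc : 0 < c) (s : List α)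
    (hps : 0 < P (p ++ s)) : c * (P p * P s) ≤ P (p ++ s) := by
  have := (div_le_div_iff₀ hps hc).1 (h s).2
  linarith

theorem apply_append_le_inv_mul (h : ApproxIndep P p c) (hc : 0 < c) (s : List α)
    (hps : 0 < P (p ++ s)) : P (p ++ s) ≤ c⁻¹ * (P p * P s) := by
  rw [le_inv_mul_iff₀ hc]
  exact (le_div_iff₀ hps).1 (h s).1

end ApproxIndep

section Mixture

variable {α ι : Type*} {t : Finset ι} {w : ι → ℝ} {Pφ : ι → List α → ℝ} {p s : List α}
  {c : ℝ}

theorem mul_sum_le_sum_append (hc : 0 < c) (hw : ∀ φ ∈ t, 0 ≤ w φ)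
    (hP : ∀ φ ∈ t, 0 < Pφ φ (p ++ s)) (hindep : ∀ φ ∈ t, ApproxIndep (Pφ φ) p c) :
    c * ∑ φ ∈ t, w φ * Pφ φ p * Pφ φ s ≤ ∑ φ ∈ t, w φ * Pφ φ (p ++ s) := by
  rw [mul_sum]
  refine sum_le_sum fun φ hφ => ?_
  have := mul_le_mul_of_nonneg_left
    ((hindep φ hφ).mul_le_apply_append hc s (hP φ hφ)) (hw φ hφ)
  linarith

theorem sum_append_le_inv_mul_sum (hc : 0 < c) (hw : ∀ φ ∈ t, 0 ≤ w φ)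
    (hP : ∀ φ ∈ t, 0 < Pφ φ (p ++ s)) (hindep : ∀ φ ∈ t, ApproxIndep (Pφ φ) p c) :
    ∑ φ ∈ t, w φ * Pφ φ (p ++ s) ≤ c⁻¹ * ∑ φ ∈ t, w φ * Pφ φ p * Pφ φ s := by
  rw [mul_sum]
  refine sum_le_sum fun φ hφ => ?_
  have := mul_le_mul_of_nonneg_left
    ((hindep φ hφ).apply_append_le_inv_mul hc s (hP φ hφ)) (hw φ hφ)
  linarith

end Mixture

section RatioBounds

variable {a A B D c : ℝ}

theorem sq_mul_div_le_div (hc : 0 < c) (hA : 0 ≤ A) (haA : c * a ≤ A) (hB : 0 < B)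
    (hBD : B ≤ c⁻¹ * D) : c ^ 2 * a / D ≤ A / B := by
  calc c ^ 2 * a / D = c * a / (c⁻¹ * D) := by field_simp
    _ ≤ A / B := div_le_div₀ hA haA hB hBD

theorem div_le_inv_sq_mul_div (hc : 0 < c) (hD : 0 < D) (ha : 0 ≤ a) (hAa : A ≤ c⁻¹ * a)
    (hDB : c * D ≤ B) : A / B ≤ c⁻¹ ^ 2 * a / D := by
  calc A / B ≤ c⁻¹ * a / (c * D) := div_le_div₀ (by positivity) hAa (by positivity) hDB
    _ = c⁻¹ ^ 2 * a / D := by field_simp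

end RatioBounds

theorem mixture_posterior_margin_lower_bound_general
    {α : Type*} {ι : Type*} [Fintype ι]
    (w : ι → ℝ) (Pφ : ι → List α → ℝ) (c1 : ℝ)
    (hc1 : 0 < c1)
    (hw : ∀ φ, 0 < w φ) (hP : ∀ φ s, 0 < Pφ φ s)
    (p x : List α) (y ytil : α)
    (hindep : ∀ (φ : ι) (s : List α),
      c1 ≤ Pφ φ p * Pφ φ s / Pφ φ (p ++ s) ∧
      Pφ φ p * Pφ φ s / Pφ φ (p ++ s) ≤ 1 / c1) :
    (∑ φ, w φ * Pφ φ (p ++ x ++ [y])) / (∑ φ, w φ * Pφ φ (p ++ x)) -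
      (∑ φ, w φ * Pφ φ (p ++ x ++ [ytil])) / (∑ φ, w φ * Pφ φ (p ++ x)) ≥
    (∑ φ, w φ * Pφ φ p *
        (c1 ^ 2 * Pφ φ (x ++ [y]) - c1⁻¹ ^ 2 * Pφ φ (x ++ [ytil]))) /
      (∑ φ, w φ * Pφ φ p * Pφ φ x) := by
  rcases isEmpty_or_nonempty ι with hι | hι
  · simp
  have hw' : ∀ φ ∈ univ, 0 ≤ w φ := fun φ _ => (hw φ).le
  have hP' : ∀ s, ∀ φ ∈ (univ : Finset ι), 0 < Pφ φ (p ++ s) := fun s φ _ => hP φ _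
  have hindep' : ∀ φ ∈ univ, ApproxIndep (Pφ φ) p c1 := fun φ _ => hindep φ
  have hD : 0 < ∑ φ, w φ * Pφ φ p * Pφ φ x :=
    sum_pos (fun φ _ => mul_pos (mul_pos (hw φ) (hP φ p)) (hP φ x)) univ_nonempty
  have hB : 0 < ∑ φ, w φ * Pφ φ (p ++ x) :=
    lt_of_lt_of_le (by positivity) (mul_sum_le_sum_append hc1 hw' (hP' x) hindep')
  simp only [List.append_assoc, mul_sub, sum_sub_distrib, sub_div, ge_iff_le]
  simp only [mul_left_comm _ (c1 ^ 2), mul_left_comm _ (c1⁻¹ ^ 2), ← mul_sum]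
  refine sub_le_sub (sq_mul_div_le_div hc1 ?_ ?_ hB ?_) (div_le_inv_sq_mul_div hc1 hD ?_ ?_ ?_)
  · exact sum_nonneg fun φ _ => mul_nonneg (hw φ).le (hP φ _).le
  · exact mul_sum_le_sum_append hc1 hw' (hP' _) hindep'
  · exact sum_append_le_inv_mul_sum hc1 hw' (hP' x) hindep'
  · exact sum_nonneg fun φ _ => (mul_pos (mul_pos (hw φ) (hP φ p)) (hP φ _)).le
  · exact sum_append_le_inv_mul_sum hc1 hw' (hP' _) hindep'
  · exact mul_sum_le_sum_append hc1 hw' (hP' x) hindep'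

/-- lower bound on the posterior-predictive margin of a finite
mixture in terms of the per-component quantities, under approximate
independence of the prompt `p` from the test example. -/
theorem mixture_posterior_margin_lower_bound
    {α : Type*} {ι : Type*} [Fintype ι]
    (w : ι → ℝ) (Pφ : ι → List α → ℝ) (c1 : ℝ)
    (hc1 : 0 < c1) (hc1' : c1 ≤ 1)
    (hw : ∀ φ, 0 < w φ) (hP : ∀ φ s, 0 < Pφ φ s)
    (p x : List α) (y ytil : α)
    (hindep : ∀ (φ : ι) (s : List α),
      c1 ≤ Pφ φ p * Pφ φ s / Pφ φ (p ++ s) ∧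
      Pφ φ p * Pφ φ s / Pφ φ (p ++ s) ≤ 1 / c1) :
    (∑ φ, w φ * Pφ φ (p ++ x ++ [y])) / (∑ φ, w φ * Pφ φ (p ++ x)) -
      (∑ φ, w φ * Pφ φ (p ++ x ++ [ytil])) / (∑ φ, w φ * Pφ φ (p ++ x)) ≥
    (∑ φ, w φ * Pφ φ p *
        (c1 ^ 2 * Pφ φ (x ++ [y]) - c1⁻¹ ^ 2 * Pφ φ (x ++ [ytil]))) /
      (∑ φ, w φ * Pφ φ p * Pφ φ x) :=
  mixture_posterior_margin_lower_bound_general w Pφ c1 hc1 hw hP p x y ytil hindep
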